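/- Define f_{r,k}(x) = \sum_{b=0}^\infty ((ab+r)^{b+k}/b!) x^{ab+r}. Then f_{r,k}(x) = (x d/dx)^{k+1} (z(x)^r / r), where z(x) is the solution of z = x e^{z^a}. -/

import Mathlib

/-!
Differentiating `z = x e^{z^a}` gives `x z' = z + a z^a · x z'`, and hence, for every `t`,
`(t + a) · xD (z^t) = (t + a) t · z^t + a t · xD (z^{t+a})`. On the `n`-th coefficients this is
the recursion `(t + a)(n - t) [xⁿ] z^t = a t n [xⁿ] z^{t+a}`. It shows that `z^t` is supported on
the exponents `n = t + ab`, and, by induction on `b`, that `n [xⁿ] z^t = t n^b / b!` there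
(the value given by Lagrange inversion). Finally `xD^{k+1}` multiplies `[xⁿ]` by `n^{k+1}`.
-/

open PowerSeries

/-- `expOf f = exp ∘ f` for a power series `f` with zero constant term. -/
noncomputable def expOf (f : PowerSeries ℚ) : PowerSeries ℚ :=
  PowerSeries.mk fun n =>
    ∑ m ∈ Finset.range (n + 1), (PowerSeries.coeff n (f ^ m)) / Nat.factorial m

noncomputable def xD (f : PowerSeries ℚ) : PowerSeries ℚ :=
  PowerSeries.mk fun n => (n : ℚ) * PowerSeries.coeff n f

lemma coeff_natCast_mul {R : Type*} [Semiring R] (n m : ℕ) (f : R⟦X⟧) :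
    coeff n ((m : R⟦X⟧) * f) = m * coeff n f := by
  rw [← map_natCast C, coeff_C_mul]

lemma coeff_pow_eq_zero_of_lt {R : Type*} [CommSemiring R] {f : R⟦X⟧}
    (hf : constantCoeff f = 0) {n m : ℕ} (h : n < m) : coeff n (f ^ m) = 0 :=
  X_pow_dvd_iff.1 (pow_dvd_pow_of_dvd (X_dvd_iff.2 hf) m) n h

lemma constantCoeff_eq_zero_of_eq_X_mul {R : Type*} [Semiring R] {f g : R⟦X⟧}
    (h : f = X * g) : constantCoeff f = 0 := by
  rw [h, map_mul, constantCoeff_X, zero_mul]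

lemma coeff_xD (n : ℕ) (f : PowerSeries ℚ) : coeff n (xD f) = n * coeff n f :=
  coeff_mk _ _

lemma coeff_xD_iterate (j n : ℕ) (f : PowerSeries ℚ) :
    coeff n (xD^[j] f) = (n : ℚ) ^ j * coeff n f := by
  induction j with
  | zero => simp
  | succ j ih => rw [Function.iterate_succ_apply', coeff_xD, ih, pow_succ']; ring

lemma xD_eq_X_mul_derivative (f : PowerSeries ℚ) : xD f = X * d⁄dX ℚ f := by
  ext (_ | n)
  · simp [coeff_xD]
  · rw [coeff_xD, coeff_succ_X_mul, coeff_derivative]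
    push_cast
    ring

lemma xD_X : xD (X : PowerSeries ℚ) = X := by
  rw [xD_eq_X_mul_derivative, derivative_X, mul_one]

lemma xD_mul (f g : PowerSeries ℚ) : xD (f * g) = xD f * g + f * xD g := by
  simp only [xD_eq_X_mul_derivative, Derivation.leibniz, smul_eq_mul]
  ring

lemma xD_pow (f : PowerSeries ℚ) (m : ℕ) : xD (f ^ (m + 1)) = (m + 1) * f ^ m * xD f := by
  rw [xD_eq_X_mul_derivative, xD_eq_X_mul_derivative, derivative_pow]
  push_cast
  ring

lemma expOf_eq_subst {f : PowerSeries ℚ} (hf : constantCoeff f = 0) :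
    expOf f = (exp ℚ).subst f := by
  ext n
  rw [expOf, coeff_mk, coeff_subst' (HasSubst.of_constantCoeff_zero' hf),
    finsum_eq_sum_of_support_subset _ (s := Finset.range (n + 1))]
  · simp [div_eq_inv_mul]
  · intro m hm
    rw [Finset.coe_range, Set.mem_Iio]
    by_contra h
    exact hm (by simp only [coeff_pow_eq_zero_of_lt hf (show n < m by omega), smul_zero])

lemma xD_expOf {f : PowerSeries ℚ} (hf : constantCoeff f = 0) :
    xD (expOf f) = expOf f * xD f := by
  rw [xD_eq_X_mul_derivative, xD_eq_X_mul_derivative, expOf_eq_subst hf,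
    derivative_subst (HasSubst.of_constantCoeff_zero' hf), derivative_exp]
  ring

section LagrangeExp

variable {a : ℕ} {z : PowerSeries ℚ} (hz : z = X * expOf (z ^ a))
include hz

lemma coeff_self_pow (t : ℕ) : coeff t (z ^ t) = 1 := by
  have hE : constantCoeff (expOf (z ^ a)) = 1 := by
    rw [← coeff_zero_eq_constantCoeff_apply, expOf, coeff_mk]
    simp
  rw [hz, mul_pow, coeff_X_pow_mul', if_pos le_rfl, Nat.sub_self,
    coeff_zero_eq_constantCoeff_apply, map_pow, hE, one_pow]

variable (ha : a ≠ 0)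
include ha

lemma xD_eq_add_mul_pow_mul_xD : xD z = z + a * z ^ a * xD z := by
  have h0 := constantCoeff_eq_zero_of_eq_X_mul hz
  obtain ⟨c, rfl⟩ := Nat.exists_eq_add_one_of_ne_zero ha
  have hza : constantCoeff (z ^ (c + 1)) = 0 := by rw [map_pow, h0, zero_pow c.succ_ne_zero]
  conv_lhs => rw [hz, xD_mul, xD_X, xD_expOf hza, xD_pow, ← mul_assoc, ← hz]
  push_cast
  ring

lemma xD_pow_recursion (t : ℕ) :
    (t + a) * xD (z ^ t) = (t + a) * t * z ^ t + a * t * xD (z ^ (t + a)) := by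
  rcases t with _ | s
  · simp [xD_eq_X_mul_derivative]
  obtain ⟨c, rfl⟩ := Nat.exists_eq_add_one_of_ne_zero ha
  have hw := xD_eq_add_mul_pow_mul_xD hz ha
  rw [show s + 1 + (c + 1) = (s + c + 1) + 1 by ring, xD_pow, xD_pow]
  push_cast at hw ⊢
  linear_combination ((s : PowerSeries ℚ) + c + 2) * (s + 1) * z ^ s * hw

lemma coeff_pow_recursion (t n : ℕ) :
    (t + a) * (n - t) * coeff n (z ^ t) = a * t * n * coeff n (z ^ (t + a)) := by
  have h := congrArg (coeff n) (xD_pow_recursion hz ha t)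
  simp only [← Nat.cast_add, ← Nat.cast_mul, map_add, coeff_natCast_mul, coeff_xD] at h
  push_cast at h
  linear_combination h

lemma exists_eq_add_mul_of_coeff_pow_ne_zero {t n : ℕ} (h : coeff n (z ^ t) ≠ 0) :
    ∃ b, n = t + a * b := by
  induction hd : n - t using Nat.strong_induction_on generalizing t with
  | _ d ih =>
    rcases lt_trichotomy n t with hlt | rfl | hgt
    · exact absurd (coeff_pow_eq_zero_of_lt (constantCoeff_eq_zero_of_eq_X_mul hz) hlt) h
    · exact ⟨0, by simp⟩
    have hrec := coeff_pow_recursion hz ha t n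
    have hne : coeff n (z ^ (t + a)) ≠ 0 := by
      intro h'
      rw [h', mul_zero] at hrec
      have : ((t : ℚ) + a) * (n - t) ≠ 0 := by
        have : (t : ℚ) < n := by exact_mod_cast hgt
        have : (0 : ℚ) < a := by exact_mod_cast Nat.pos_of_ne_zero ha
        positivity
      exact h ((mul_eq_zero.1 hrec).resolve_left this)
    obtain ⟨b, rfl⟩ := ih (n - (t + a)) (by omega) hne rfl
    exact ⟨b + 1, by ring⟩

lemma natCast_mul_coeff_pow (b t : ℕ) :
    ((t + a * b : ℕ) : ℚ) * coeff (t + a * b) (z ^ t) =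
      t * ((t + a * b : ℕ) : ℚ) ^ b / b.factorial := by
  induction b generalizing t with
  | zero => simp [coeff_self_pow hz]
  | succ b ih =>
    set n := t + a * (b + 1)
    have hn : (t + a) + a * b = n := by ring
    have hrec := coeff_pow_recursion hz ha t n
    have hIH := ih (t + a)
    rw [hn, eq_div_iff (by positivity)] at hIH
    have hnt : (n : ℚ) - t = a * (b + 1) := by push_cast [n]; ring
    rw [hnt] at hrec
    have hta : ((t : ℚ) + a) * a ≠ 0 := by
      have : (0 : ℚ) < a := by exact_mod_cast Nat.pos_of_ne_zero ha
      positivity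
    rw [Nat.factorial_succ, eq_div_iff (by positivity)]
    refine mul_left_cancel₀ hta ?_
    push_cast at hIH ⊢
    linear_combination (n * b.factorial : ℚ) * hrec + (a * t * n : ℚ) * hIH

end LagrangeExp

theorem f_rk_eq_xD_iterate_general (a r k : ℕ) (ha : 0 < a) (hr1 : 1 ≤ r)
    (z : PowerSeries ℚ) (hz : z = PowerSeries.X * expOf (z ^ a)) :
    (PowerSeries.mk fun n =>
        if r ≤ n ∧ a ∣ (n - r) then
          (n : ℚ) ^ ((n - r) / a + k) / Nat.factorial ((n - r) / a)
        else 0)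
      = xD^[k + 1] (PowerSeries.C ((r : ℚ))⁻¹ * z ^ r) := by
  ext n
  rw [coeff_mk, coeff_xD_iterate, coeff_C_mul]
  split_ifs with h
  · obtain ⟨b, rfl⟩ : ∃ b, n = r + a * b := by
      obtain ⟨hrn, b, hb⟩ := h
      exact ⟨b, by omega⟩
    have hr : (r : ℚ) ≠ 0 := by exact_mod_cast (by omega : r ≠ 0)
    have key := natCast_mul_coeff_pow hz ha.ne' b r
    rw [eq_div_iff (by positivity)] at key
    rw [Nat.add_sub_cancel_left, Nat.mul_div_cancel_left _ ha]
    field_simp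
    linear_combination -((r + a * b : ℕ) : ℚ) ^ k * key
  · suffices coeff n (z ^ r) = 0 by rw [this, mul_zero, mul_zero]
    by_contra hc
    obtain ⟨b, rfl⟩ := exists_eq_add_mul_of_coeff_pow_ne_zero hz ha.ne' hc
    exact h ⟨by omega, by simp⟩

/-- With `z` the solution of `z = x e^{z^a}`, `z(0) = 0`, and
`f_{r,k}(x) = ∑_{b≥0} ((ab+r)^{b+k}/b!) x^{ab+r}` (coefficient `(ab+r)^{b+k}/b!` at
`n = ab+r`), one has `f_{r,k} = (x d/dx)^{k+1} (z^r / r)`. -/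
theorem f_rk_eq_xD_iterate (a r k : ℕ) (ha : 0 < a) (hr1 : 1 ≤ r) (hr2 : r ≤ a)
    (z : PowerSeries ℚ) (h0 : PowerSeries.constantCoeff z = 0)
    (hz : z = PowerSeries.X * expOf (z ^ a)) :
    (PowerSeries.mk fun n =>
        if r ≤ n ∧ a ∣ (n - r) then
          (n : ℚ) ^ ((n - r) / a + k) / Nat.factorial ((n - r) / a)
        else 0)
      = xD^[k + 1] (PowerSeries.C ((r : ℚ))⁻¹ * z ^ r) :=
  f_rk_eq_xD_iterate_general a r k ha hr1 z hz
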